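/- Let T be the n×n matrix with entries T_{ij} = 1 + sgn(i−j) (sgn(0)=0), and let D = diag((−1)¹, (−1)², …, (−1)ⁿ). Then D T D = T^{−1}; in particular T is invertible. -/

import Mathlib

open Matrix BigOperators

/-- The matrix `T` with `T_{ij} = 1 + sgn(i − j)` and `sgn(0) = 0`. -/
def Tmat (n : ℕ) : Matrix (Fin n) (Fin n) ℂ :=
  fun i j => 1 + ((((i : ℤ) - (j : ℤ)).sign : ℤ) : ℂ)

/-- `D = diag((−1)¹, (−1)², …, (−1)ⁿ)`. -/
def Dmat (n : ℕ) : Matrix (Fin n) (Fin n) ℂ :=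
  Matrix.diagonal (fun i => (-1 : ℂ) ^ ((i : ℕ) + 1))

/-!
With `N` the nilpotent lower shift matrix, `T = (1 + N)(1 - N)⁻¹` is the Cayley transform of `N`,
the inverse `(1 - N)⁻¹` being the lower triangular matrix of ones. Conjugation by the involution
`D` sends `N` to `-N`, hence `DTD = (1 - N)(1 + N)⁻¹ = T⁻¹`.
-/

theorem cayley_mul_conj_eq_one {A : Type*} [Ring A] {d x y : A} (hd : d * d = 1)
    (hx : d * x * d = -x) (hy : (1 - x) * y = 1) (hy' : y * (1 - x) = 1) :
    (1 + x) * y * (d * ((1 + x) * y) * d) = 1 := by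
  have hdd (z : A) : d * (d * z) = z := by rw [← mul_assoc, hd, one_mul]
  have hconj_add : d * (1 + x) * d = 1 - x := by
    rw [mul_add, add_mul, mul_one, hd, hx, sub_eq_add_neg]
  have hconj_sub : d * (1 - x) * d = 1 + x := by
    rw [mul_sub, sub_mul, mul_one, hd, hx, sub_neg_eq_add]
  calc (1 + x) * y * (d * ((1 + x) * y) * d)
      = (1 + x) * y * (d * (1 + x) * d) * (d * y * d) := by simp only [mul_assoc, hdd]
    _ = (1 + x) * (y * (1 - x)) * (d * y * d) := by rw [hconj_add, mul_assoc (1 + x)]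
    _ = d * (1 - x) * d * (d * y * d) := by rw [hy', mul_one, hconj_sub]
    _ = d * ((1 - x) * y) * d := by simp only [mul_assoc, hdd]
    _ = 1 := by rw [hy, mul_one, hd]

namespace Matrix

def lowerShift (R : Type*) [Zero R] [One R] (n : ℕ) : Matrix (Fin n) (Fin n) R :=
  of fun i j => if (i : ℕ) = j + 1 then 1 else 0

def lowerOnes (R : Type*) [Zero R] [One R] (n : ℕ) : Matrix (Fin n) (Fin n) R :=
  of fun i j => if (j : ℕ) ≤ i then 1 else 0

def strictLowerOnes (R : Type*) [Zero R] [One R] (n : ℕ) : Matrix (Fin n) (Fin n) R :=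
  of fun i j => if (j : ℕ) < i then 1 else 0

theorem lowerShift_mul_lowerOnes {R : Type*} [NonAssocSemiring R] (n : ℕ) :
    lowerShift R n * lowerOnes R n = strictLowerOnes R n := by
  ext i k
  cases n with
  | zero => exact i.elim0
  | succ n =>
    induction i using Fin.cases with
    | zero => simp [lowerShift, lowerOnes, strictLowerOnes, mul_apply]
    | succ i =>
      simp only [lowerShift, lowerOnes, strictLowerOnes, mul_apply, of_apply, Fin.val_succ,
        Nat.succ_inj, ite_mul, one_mul, zero_mul, ← Fin.val_castSucc i, Fin.val_inj,
        Finset.sum_ite_eq, Finset.mem_univ, if_true, Nat.lt_succ_iff]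

theorem one_sub_lowerShift_mul_lowerOnes {R : Type*} [Ring R] (n : ℕ) :
    (1 - lowerShift R n) * lowerOnes R n = 1 := by
  rw [sub_mul, one_mul, lowerShift_mul_lowerOnes]
  ext i k
  simp only [lowerOnes, strictLowerOnes, sub_apply, of_apply, one_apply, Fin.ext_iff]
  split_ifs <;> first | omega | simp

end Matrix

theorem Tmat_eq_one_add_lowerShift_mul_lowerOnes (n : ℕ) :
    Tmat n = (1 + lowerShift ℂ n) * lowerOnes ℂ n := by
  rw [add_mul, one_mul, lowerShift_mul_lowerOnes]
  ext i j
  simp only [Tmat, lowerOnes, strictLowerOnes, Matrix.add_apply, of_apply]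
  rcases lt_trichotomy (j : ℤ) i with h | h | h
  · rw [Int.sign_eq_one_of_pos (by omega), if_pos (by omega), if_pos (by omega)]
    norm_num
  · rw [h, sub_self, Int.sign_zero, if_pos (by omega), if_neg (by omega)]
    norm_num
  · rw [Int.sign_eq_neg_one_of_neg (by omega), if_neg (by omega), if_neg (by omega)]
    norm_num

theorem Dmat_mul_Dmat (n : ℕ) : Dmat n * Dmat n = 1 := by
  simp [Dmat, diagonal_mul_diagonal, ← mul_pow]

theorem Dmat_mul_lowerShift_mul_Dmat (n : ℕ) :
    Dmat n * lowerShift ℂ n * Dmat n = -lowerShift ℂ n := by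
  ext i j
  simp only [Dmat, lowerShift, diagonal_mul, mul_diagonal, of_apply, Matrix.neg_apply]
  split_ifs with h
  · rw [h, mul_one, ← pow_add, show (j : ℕ) + 1 + 1 + (j + 1) = 2 * (j + 1) + 1 by ring,
      pow_succ, pow_mul]
    norm_num
  · simp

theorem DTD_eq_T_inv (n : ℕ) :
    Dmat n * Tmat n * Dmat n = (Tmat n)⁻¹ ∧ IsUnit (Tmat n) := by
  have h : Tmat n * (Dmat n * Tmat n * Dmat n) = 1 := by
    rw [Tmat_eq_one_add_lowerShift_mul_lowerOnes]
    exact cayley_mul_conj_eq_one (Dmat_mul_Dmat n) (Dmat_mul_lowerShift_mul_Dmat n)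
      (one_sub_lowerShift_mul_lowerOnes n)
      (mul_eq_one_comm.mp (one_sub_lowerShift_mul_lowerOnes n))
  exact ⟨(inv_eq_right_inv h).symm, (isUnit_iff_isUnit_det _).mpr (isUnit_det_of_right_inverse h)⟩
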